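/- Let x, y, s, t be integers such that x^2 - 1 - s^2 - s^4 = -t^2 and y^2 - 1 - t^2 - t^4 = 1 + s^2. Then (x,y,s,t) = (0, ±2, 0, ±1). -/

import Mathlib

/-!
Both equations place a square just above a fourth power: `x² = s⁴ + s² + 1 - t²` and
`y² = t⁴ + t² + s² + 2`. Since no square lies strictly between `n²` and `(n + 1)²`, the first
equation forces `s² < t²` (otherwise `s = t = 0` and `y² = 2`), and then the second forces
`t² = s² + 1`, whence `s = 0`, `t = ±1`, `x = 0` and `y = ±2`.
-/

lemma Int.abs_add_one_sq_le_sq_of_sq_lt {a b : ℤ} (h : a ^ 2 < b ^ 2) : (|a| + 1) ^ 2 ≤ b ^ 2 := by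
  have hab : |a| + 1 ≤ |b| := sq_lt_sq.mp h
  calc (|a| + 1) ^ 2 ≤ |b| ^ 2 := pow_le_pow_left₀ (by positivity) hab 2
    _ = b ^ 2 := sq_abs b

lemma Int.sq_ne_two (y : ℤ) : y ^ 2 ≠ 2 := by
  intro hy
  have := Int.abs_add_one_sq_le_sq_of_sq_lt (a := 1) (b := y) (by omega)
  norm_num [hy] at this

theorem stmt_16 (x y s t : ℤ)
    (h1 : x^2 - 1 - s^2 - s^4 = -t^2) (h2 : y^2 - 1 - t^2 - t^4 = 1 + s^2) :
    x = 0 ∧ (y = 2 ∨ y = -2) ∧ s = 0 ∧ (t = 1 ∨ t = -1) := by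
  have hst : s ^ 2 < t ^ 2 := by
    by_contra! hts
    have hx := Int.abs_add_one_sq_le_sq_of_sq_lt (a := s ^ 2) (b := x) (by nlinarith)
    rw [abs_of_nonneg (sq_nonneg s)] at hx
    have hs : s ^ 2 = 0 := by nlinarith [sq_nonneg s]
    have ht : t ^ 2 = 0 := by nlinarith [sq_nonneg t]
    exact Int.sq_ne_two y (by nlinarith)
  have hy := Int.abs_add_one_sq_le_sq_of_sq_lt (a := t ^ 2) (b := y) (by nlinarith)
  rw [abs_of_nonneg (sq_nonneg t)] at hy
  have ht : t ^ 2 = s ^ 2 + 1 := by nlinarith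
  have hs := Int.abs_add_one_sq_le_sq_of_sq_lt hst
  have hs0 : s = 0 := abs_eq_zero.mp (by nlinarith [sq_abs s, abs_nonneg s])
  subst hs0
  have ht1 : t ^ 2 = 1 ^ 2 := by linarith
  have hx0 : x ^ 2 = 0 := by linarith
  have hy2 : y ^ 2 = 2 ^ 2 := by nlinarith
  exact ⟨pow_eq_zero_iff two_ne_zero |>.mp hx0, sq_eq_sq_iff_eq_or_eq_neg.mp hy2, rfl,
    sq_eq_sq_iff_eq_or_eq_neg.mp ht1⟩
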